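/- Let 0 < α < 1, let (a,b) be a finite interval, and let F ∈ L^1((a,b)). Suppose I₋^{1-α}F is absolutely continuous on [a,b], in the sense that there exist a constant d ∈ ℝ and g ∈ L^1((a,b)) such that (I₋^{1-α}F)(x) = d + ∫_a^x g(t) dt for every x ∈ [a,b]. Then for almost every x ∈ (a,b), F(x) = (d/Γ(α)) (x-a)^{α-1} + (I₋^α g)(x), where g = D₋^α F almost everywhere. -/

import Mathlib

/-!
The semigroup law `I^β (I^γ f) = I^(β+γ) f` (Fubini on the triangle `a < y < t < x` and the Beta
integral) turns the hypothesis into `∫_a^x F = I^α (I^(1-α) F)(x) = I^α (d + I^1 g)(x)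
= d (x-a)^α / Γ(α+1) + I^(α+1) g (x)`, and the same computation gives this value for
`∫_a^x h`, where `h = d (t-a)^(α-1) / Γ(α) + I^α g`. Two integrable functions with the same
primitives agree almost everywhere by the Lebesgue differentiation theorem, which also gives the
derivative of `d + ∫_a^x g`.
-/

open MeasureTheory Real Set

/-- The left Riemann–Liouville fractional integral of order `σ` on `(a,b)`:
`(I₋^σ f)(x) = (1/Γ(σ)) ∫_a^x (x-y)^{σ-1} f(y) dy`. -/
noncomputable def leftRLInt (σ a : ℝ) (f : ℝ → ℝ) (x : ℝ) : ℝ :=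
  (1 / Real.Gamma σ) * ∫ y in a..x, (x - y) ^ (σ - 1) * f y

theorem integral_rpow_mul_sub_rpow {s t c : ℝ} (hs : 0 < s) (ht : 0 < t) (hc : 0 < c) :
    ∫ u in 0..c, u ^ (s - 1) * (c - u) ^ (t - 1)
      = Gamma s * Gamma t / Gamma (s + t) * c ^ (s + t - 1) := by
  apply Complex.ofReal_injective
  rw [← intervalIntegral.integral_ofReal]
  have hcast : ∀ u ∈ uIcc 0 c, ((u ^ (s - 1) * (c - u) ^ (t - 1) : ℝ) : ℂ)
      = (u : ℂ) ^ ((s : ℂ) - 1) * ((c : ℂ) - u) ^ ((t : ℂ) - 1) := by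
    intro u hu
    rw [uIcc_of_le hc.le] at hu
    push_cast [Complex.ofReal_cpow hu.1, Complex.ofReal_cpow (sub_nonneg.2 hu.2)]
    rfl
  rw [intervalIntegral.integral_congr hcast, Complex.betaIntegral_scaled _ _ hc,
    Complex.betaIntegral_eq_Gamma_mul_div _ _ (by simpa) (by simpa), ← Complex.ofReal_add]
  simp only [Complex.Gamma_ofReal]
  push_cast [Complex.ofReal_cpow hc.le]
  ring

theorem integral_rsub_rpow_mul_sub_rpow {β γ x y : ℝ} (hβ : 0 < β) (hγ : 0 < γ)
    (hyx : y < x) :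
    ∫ t in y..x, (x - t) ^ (β - 1) * (t - y) ^ (γ - 1)
      = Gamma β * Gamma γ / Gamma (β + γ) * (x - y) ^ (β + γ - 1) := by
  have hshift := intervalIntegral.integral_comp_sub_right
    (fun u => u ^ (γ - 1) * (x - y - u) ^ (β - 1)) y (a := y) (b := x)
  simp only [sub_self, sub_sub_sub_cancel_right] at hshift
  rw [intervalIntegral.integral_congr (g := fun t => (t - y) ^ (γ - 1) * (x - t) ^ (β - 1))
    (fun t _ => mul_comm _ _), hshift, integral_rpow_mul_sub_rpow hγ hβ (sub_pos.2 hyx),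
    mul_comm (Gamma γ), add_comm γ]

theorem intervalIntegrable_rsub_rpow_mul_sub_rpow {β γ x y : ℝ} (hβ : 0 < β) (hγ : 0 < γ)
    (hyx : y ≤ x) :
    IntervalIntegrable (fun t => (x - t) ^ (β - 1) * (t - y) ^ (γ - 1)) volume y x := by
  rcases hyx.lt_or_eq with hyx | rfl
  -- a nonzero integral is not the junk value `0` of a non-integrable function
  · apply intervalIntegral.intervalIntegrable_of_integral_ne_zero
    rw [integral_rsub_rpow_mul_sub_rpow hβ hγ hyx]
    have := sub_pos.2 hyx
    positivity
  · exact .refl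

theorem integral_Ioc_integral_Ioc_swap {E : Type*} [NormedAddCommGroup E] [NormedSpace ℝ E]
    {a x : ℝ} {K : ℝ → ℝ → E}
    (hK : AEStronglyMeasurable (Function.uncurry K)
      ((volume.restrict (Ioc a x)).prod (volume.restrict (Ioc a x))))
    (hK_inner : ∀ y ∈ Ioc a x, IntegrableOn (fun t => K t y) (Ioc y x))
    (hK_norm : IntegrableOn (fun y => ∫ t in Ioc y x, ‖K t y‖) (Ioc a x)) :
    IntegrableOn (fun t => ∫ y in Ioc a t, K t y) (Ioc a x) ∧
      ∫ t in Ioc a x, ∫ y in Ioc a t, K t y = ∫ y in Ioc a x, ∫ t in Ioc y x, K t y := by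
  set L : ℝ → ℝ → E := fun t y => (Ioi y).indicator (fun t => K t y) t
  have hL_left : ∀ t ∈ Ioc a x, ∫ y in Ioc a x, L t y = ∫ y in Ioc a t, K t y := by
    intro t ht
    have hL : (fun y => L t y) = (Iio t).indicator (K t) := by
      ext y; simp [L, indicator_apply]
    have hset : Ioc a x ∩ Iio t = Ioo a t := by
      ext s; simp only [mem_inter_iff, mem_Ioc, mem_Iio, mem_Ioo]; grind
    rw [hL, setIntegral_indicator measurableSet_Iio, hset, integral_Ioc_eq_integral_Ioo]
  have hL_right : ∀ y ∈ Ioc a x, Ioc a x ∩ Ioi y = Ioc y x := fun y hy => by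
    rw [Ioc_inter_Ioi, max_eq_right hy.1.le]
  have hL_int : Integrable (Function.uncurry L)
      ((volume.restrict (Ioc a x)).prod (volume.restrict (Ioc a x))) := by
    have hmeas : AEStronglyMeasurable (Function.uncurry L)
        ((volume.restrict (Ioc a x)).prod (volume.restrict (Ioc a x))) := by
      have : Function.uncurry L = {p : ℝ × ℝ | p.2 < p.1}.indicator (Function.uncurry K) := by
        ext p; simp [L, indicator_apply, Function.uncurry_def]
      exact this ▸ hK.indicator (measurableSet_lt measurable_snd measurable_fst)
    refine (integrable_prod_iff' hmeas).2
      ⟨?_, hK_norm.congr_fun (fun y hy => ?_) measurableSet_Ioc⟩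
    · filter_upwards [ae_restrict_mem measurableSet_Ioc] with y hy
      change Integrable ((Ioi y).indicator fun t => K t y) _
      rw [integrable_indicator_iff measurableSet_Ioi, IntegrableOn,
        Measure.restrict_restrict measurableSet_Ioi, inter_comm, hL_right y hy]
      exact hK_inner y hy
    · change _ = ∫ t in Ioc a x, ‖(Ioi y).indicator (fun t => K t y) t‖
      simp_rw [norm_indicator_eq_indicator_norm]
      rw [setIntegral_indicator measurableSet_Ioi, hL_right y hy]
  refine ⟨IntegrableOn.congr_fun (f := fun t => ∫ y in Ioc a x, L t y)
    hL_int.integral_prod_left hL_left measurableSet_Ioc, ?_⟩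
  rw [← setIntegral_congr_fun measurableSet_Ioc hL_left, integral_integral_swap hL_int]
  refine setIntegral_congr_fun measurableSet_Ioc fun y hy => ?_
  rw [setIntegral_indicator measurableSet_Ioi, hL_right y hy]

theorem ae_restrict_Ioo_eq_of_forall_integral_eq {E : Type*} [NormedAddCommGroup E]
    [NormedSpace ℝ E] [CompleteSpace E] {f g : ℝ → E} {a b : ℝ}
    (hf : IntervalIntegrable f volume a b) (hg : IntervalIntegrable g volume a b)
    (h : ∀ x ∈ Ioc a b, ∫ t in a..x, f t = ∫ t in a..x, g t) :
    f =ᵐ[volume.restrict (Ioo a b)] g := by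
  filter_upwards [ae_restrict_mem measurableSet_Ioo, ae_restrict_of_ae hf.ae_hasDerivAt_integral,
    ae_restrict_of_ae hg.ae_hasDerivAt_integral] with x hx hfx hgx
  have hx' : x ∈ uIcc a b := by
    rw [uIcc_of_le (hx.1.trans hx.2).le]
    exact Ioo_subset_Icc_self hx
  refine (hfx hx' a left_mem_uIcc).unique ((hgx hx' a left_mem_uIcc).congr_of_eventuallyEq ?_)
  filter_upwards [Ioo_mem_nhds hx.1 hx.2] with t ht using h t (Ioo_subset_Ioc_self ht)

section leftRLInt

variable {β γ a x : ℝ} {f g : ℝ → ℝ}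

theorem leftRLInt_one : leftRLInt 1 a f x = ∫ y in a..x, f y := by
  simp [leftRLInt]

theorem leftRLInt_congr (h : EqOn f g (uIoc a x)) : leftRLInt β a f x = leftRLInt β a g x := by
  rw [leftRLInt, leftRLInt, intervalIntegral.integral_congr_ae (.of_forall fun y hy => by
    rw [h hy])]

theorem leftRLInt_const_mul_sub_rpow_add (hβ : 0 < β) (hγ : 0 < γ) (hax : a < x)
    (hf : IntervalIntegrable (fun t => (x - t) ^ (β - 1) * f t) volume a x) (c : ℝ) :
    leftRLInt β a (fun t => c * (t - a) ^ (γ - 1) + f t) x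
      = c * Gamma γ / Gamma (β + γ) * (x - a) ^ (β + γ - 1) + leftRLInt β a f x := by
  have hpow := (intervalIntegrable_rsub_rpow_mul_sub_rpow hβ hγ hax.le).const_mul c
  simp only [leftRLInt, mul_add]
  rw [intervalIntegral.integral_add (hpow.congr fun t _ => by ring) hf,
    intervalIntegral.integral_congr (g := fun t => c * ((x - t) ^ (β - 1) * (t - a) ^ (γ - 1)))
      (fun t _ => by ring), intervalIntegral.integral_const_mul,
    integral_rsub_rpow_mul_sub_rpow hβ hγ hax]
  have := (Gamma_pos_of_pos hβ).ne'
  field_simp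

theorem integral_Ioc_integral_Ioc_rpow_kernel (hβ : 0 < β) (hγ : 0 < γ) (hβγ : 1 ≤ β + γ)
    (hf : IntegrableOn f (Ioc a x)) :
    IntegrableOn (fun t => ∫ y in Ioc a t, (x - t) ^ (β - 1) * ((t - y) ^ (γ - 1) * f y))
        (Ioc a x) ∧
      ∫ t in Ioc a x, ∫ y in Ioc a t, (x - t) ^ (β - 1) * ((t - y) ^ (γ - 1) * f y)
        = Gamma β * Gamma γ / Gamma (β + γ) *
            ∫ y in Ioc a x, (x - y) ^ (β + γ - 1) * f y := by
  set B := Gamma β * Gamma γ / Gamma (β + γ)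
  set K : ℝ → ℝ → ℝ := fun t y => (x - t) ^ (β - 1) * ((t - y) ^ (γ - 1) * f y)
  have h_lt : ∀ᵐ y ∂volume.restrict (Ioc a x), y ∈ Ioo a x := by
    rw [← Measure.restrict_congr_set Ioo_ae_eq_Ioc]
    exact ae_restrict_mem measurableSet_Ioo
  have h_beta : ∀ y ∈ Ioo a x, ∀ c : ℝ,
      ∫ t in Ioc y x, (x - t) ^ (β - 1) * ((t - y) ^ (γ - 1) * c)
        = B * ((x - y) ^ (β + γ - 1) * c) := by
    intro y hy c
    simp only [← mul_assoc, integral_mul_const]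
    rw [← intervalIntegral.integral_of_le hy.2.le, integral_rsub_rpow_mul_sub_rpow hβ hγ hy.2]
  have hK_meas : AEStronglyMeasurable (Function.uncurry K)
      ((volume.restrict (Ioc a x)).prod (volume.restrict (Ioc a x))) :=
    ((by fun_prop : Measurable fun p : ℝ × ℝ => (x - p.1) ^ (β - 1) * (p.1 - p.2) ^ (γ - 1))
      |>.aestronglyMeasurable.mul hf.aestronglyMeasurable.comp_snd).congr
      (.of_forall fun p => mul_assoc _ _ _)
  have hK_inner : ∀ y ∈ Ioc a x, IntegrableOn (fun t => K t y) (Ioc y x) := fun y hy =>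
    IntegrableOn.congr_fun (((intervalIntegrable_iff_integrableOn_Ioc_of_le hy.2).1
      (intervalIntegrable_rsub_rpow_mul_sub_rpow hβ hγ hy.2)).mul_const (f y))
      (fun t _ => by simp only [K]; ring) measurableSet_Ioc
  have hK_norm : IntegrableOn (fun y => ∫ t in Ioc y x, ‖K t y‖) (Ioc a x) := by
    have h_cont : ContinuousOn (fun y => (x - y) ^ (β + γ - 1)) (Icc a x) :=
      ((continuous_rpow_const (by linarith)).comp (continuous_const.sub continuous_id)).continuousOn
    refine Integrable.congr ((IntegrableOn.continuousOn_mul_of_subset h_cont hf.norm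
      isCompact_Icc measurableSet_Ioc Ioc_subset_Icc_self).const_mul B) (h_lt.mono fun y hy => ?_)
    dsimp only
    rw [← h_beta y hy ‖f y‖]
    refine setIntegral_congr_fun measurableSet_Ioc fun t ht => ?_
    simp only [K, norm_mul, norm_of_nonneg (rpow_nonneg (sub_nonneg.2 ht.2) _),
      norm_of_nonneg (rpow_nonneg (sub_pos.2 ht.1).le _)]
  obtain ⟨h_int, h_swap⟩ := integral_Ioc_integral_Ioc_swap hK_meas hK_inner hK_norm
  refine ⟨h_int, h_swap.trans ?_⟩
  rw [← integral_const_mul]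
  exact integral_congr_ae (h_lt.mono fun y hy => h_beta y hy (f y))

theorem rsub_rpow_mul_leftRLInt {t : ℝ} (hat : a ≤ t) :
    (x - t) ^ (β - 1) * leftRLInt γ a f t
      = 1 / Gamma γ * ∫ y in Ioc a t, (x - t) ^ (β - 1) * ((t - y) ^ (γ - 1) * f y) := by
  simp only [leftRLInt, intervalIntegral.integral_of_le hat, integral_const_mul]
  ring

theorem intervalIntegrable_rsub_rpow_mul_leftRLInt (hβ : 0 < β) (hγ : 0 < γ)
    (hβγ : 1 ≤ β + γ) (hax : a ≤ x) (hf : IntervalIntegrable f volume a x) :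
    IntervalIntegrable (fun t => (x - t) ^ (β - 1) * leftRLInt γ a f t) volume a x := by
  rw [intervalIntegrable_iff_integrableOn_Ioc_of_le hax] at hf ⊢
  exact IntegrableOn.congr_fun
    (((integral_Ioc_integral_Ioc_rpow_kernel hβ hγ hβγ hf).1).const_mul (1 / Gamma γ))
    (fun t ht => (rsub_rpow_mul_leftRLInt ht.1.le).symm) measurableSet_Ioc

theorem leftRLInt_leftRLInt (hβ : 0 < β) (hγ : 0 < γ) (hβγ : 1 ≤ β + γ) (hax : a ≤ x)
    (hf : IntervalIntegrable f volume a x) :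
    leftRLInt β a (leftRLInt γ a f) x = leftRLInt (β + γ) a f x := by
  rw [intervalIntegrable_iff_integrableOn_Ioc_of_le hax] at hf
  have := (Gamma_pos_of_pos hβ).ne'
  have := (Gamma_pos_of_pos hγ).ne'
  have := (Gamma_pos_of_pos (add_pos hβ hγ)).ne'
  rw [leftRLInt, intervalIntegral.integral_of_le hax,
    setIntegral_congr_fun measurableSet_Ioc fun t ht => rsub_rpow_mul_leftRLInt ht.1.le,
    integral_const_mul, (integral_Ioc_integral_Ioc_rpow_kernel hβ hγ hβγ hf).2,
    leftRLInt, intervalIntegral.integral_of_le hax]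
  field_simp

theorem integral_eq_of_leftRLInt_one_sub_eq {α d : ℝ} {F : ℝ → ℝ} (hα : 0 < α)
    (hα1 : α < 1) (hax : a < x) (hF : IntervalIntegrable F volume a x)
    (hg : IntervalIntegrable g volume a x)
    (hAC : ∀ t ∈ Ioc a x, leftRLInt (1 - α) a F t = d + ∫ s in a..t, g s) :
    ∫ t in a..x, F t = d / Gamma (α + 1) * (x - a) ^ α + leftRLInt (α + 1) a g x := by
  -- the constant `d` enters as the power `d * (t - a) ^ (1 - 1)`
  have hAC' : EqOn (leftRLInt (1 - α) a F)
      (fun t => d * (t - a) ^ ((1 : ℝ) - 1) + leftRLInt 1 a g t) (uIoc a x) := by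
    intro t ht
    rw [uIoc_of_le hax.le] at ht
    simp [hAC t ht, leftRLInt_one]
  calc ∫ t in a..x, F t
      = leftRLInt (α + (1 - α)) a F x := by rw [add_sub_cancel, leftRLInt_one]
    _ = leftRLInt α a (fun t => d * (t - a) ^ ((1 : ℝ) - 1) + leftRLInt 1 a g t) x := by
      rw [← leftRLInt_leftRLInt hα (by linarith) (by linarith) hax.le hF, leftRLInt_congr hAC']
    _ = _ := by
      rw [leftRLInt_const_mul_sub_rpow_add hα one_pos hax
        (intervalIntegrable_rsub_rpow_mul_leftRLInt hα one_pos (by linarith) hax.le hg),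
        leftRLInt_leftRLInt hα one_pos (by linarith) hax.le hg]
      simp

theorem integral_const_mul_sub_rpow_add_leftRLInt {α d : ℝ} (hα : 0 < α) (hax : a < x)
    (hg : IntervalIntegrable g volume a x) :
    ∫ t in a..x, (d / Gamma α * (t - a) ^ (α - 1) + leftRLInt α a g t)
      = d / Gamma (α + 1) * (x - a) ^ α + leftRLInt (α + 1) a g x := by
  rw [← leftRLInt_one, leftRLInt_const_mul_sub_rpow_add one_pos hα hax
    (intervalIntegrable_rsub_rpow_mul_leftRLInt one_pos hα (by linarith) hax.le hg),
    leftRLInt_leftRLInt one_pos hα (by linarith) hax.le hg, add_comm 1 α]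
  have := (Gamma_pos_of_pos hα).ne'
  field_simp
  simp

theorem intervalIntegrable_const_mul_sub_rpow_add_leftRLInt {α : ℝ} (hα : 0 < α)
    (hax : a ≤ x) (hg : IntervalIntegrable g volume a x) (c : ℝ) :
    IntervalIntegrable (fun t => c * (t - a) ^ (α - 1) + leftRLInt α a g t) volume a x := by
  have hpow := intervalIntegrable_rsub_rpow_mul_sub_rpow one_pos hα hax
  have hI := intervalIntegrable_rsub_rpow_mul_leftRLInt one_pos hα (by linarith) hax hg
  simp only [sub_self, rpow_zero, one_mul] at hpow hI
  exact (hpow.const_mul c).add hI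

end leftRLInt

theorem stmt4 (α a b d : ℝ) (hα : 0 < α) (hα1 : α < 1) (hab : a < b)
    (F g : ℝ → ℝ) (hF : IntegrableOn F (Set.Ioo a b)) (hg : IntegrableOn g (Set.Ioo a b))
    (hAC : ∀ x ∈ Set.Icc a b, leftRLInt (1 - α) a F x = d + ∫ t in a..x, g t) :
    (∀ᵐ x ∂(volume.restrict (Set.Ioo a b)),
      F x = (d / Real.Gamma α) * (x - a) ^ (α - 1) + leftRLInt α a g x) ∧
    (∀ᵐ x ∂(volume.restrict (Set.Ioo a b)),
      HasDerivAt (fun t => leftRLInt (1 - α) a F t) (g x) x) := by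
  have h_sub : ∀ {φ : ℝ → ℝ}, IntegrableOn φ (Ioo a b) →
      ∀ x ∈ Icc a b, IntervalIntegrable φ volume a x := fun hφ x hx =>
    (intervalIntegrable_iff_integrableOn_Ioo_of_le hx.1).2
      (hφ.mono_set (Ioo_subset_Ioo_right hx.2))
  have hb : b ∈ Icc a b := right_mem_Icc.2 hab.le
  have h_prim : ∀ x ∈ Ioc a b, ∫ t in a..x, F t
      = ∫ t in a..x, (d / Gamma α * (t - a) ^ (α - 1) + leftRLInt α a g t) := fun x hx =>
    have hx' := Ioc_subset_Icc_self hx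
    (integral_eq_of_leftRLInt_one_sub_eq hα hα1 hx.1 (h_sub hF x hx') (h_sub hg x hx')
      fun t ht => hAC t ⟨ht.1.le, ht.2.trans hx.2⟩).trans
      (integral_const_mul_sub_rpow_add_leftRLInt hα hx.1 (h_sub hg x hx')).symm
  refine ⟨ae_restrict_Ioo_eq_of_forall_integral_eq (h_sub hF b hb)
    (intervalIntegrable_const_mul_sub_rpow_add_leftRLInt hα hab.le (h_sub hg b hb) _) h_prim, ?_⟩
  filter_upwards [ae_restrict_mem measurableSet_Ioo,
    ae_restrict_of_ae (h_sub hg b hb).ae_hasDerivAt_integral] with x hx hgx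
  rw [uIcc_of_le hab.le] at hgx
  refine ((hgx (Ioo_subset_Icc_self hx) a (left_mem_Icc.2 hab.le)).const_add d)
    |>.congr_of_eventuallyEq ?_
  filter_upwards [Icc_mem_nhds hx.1 hx.2] with t ht using hAC t ht
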